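/- For every integer p, every binary vector x : Fin n → ℤ, every z : Fin n → ℤ and every bit string e : Fin n → Fin 2, the action of an XP operator on a computational basis vector is XP_N(p|x|z).mulVec |e⟩ = ω^(p + 2 * ∑ i, (e i : ℤ) * z i) • |e ⊕ x⟩, where e ⊕ x denotes componentwise addition modulo 2. -/

import Mathlib

/-! Each factor `X^a P^b` with `a ∈ {0, 1}` is a monomial matrix: it sends `|e⟩` to
`ω^(2eb) |e + a⟩`. A Kronecker product of monomial matrices is again monomial, with the
permutations acting coordinatewise and the weights multiplying, which gives the phase
`ω^p ∏ ω^(2 e_i z_i) = ω^(p + 2 e·z)`. -/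

open Matrix

/-- `ω = exp(πi/N)`. -/
noncomputable def omN (N : ℕ) : ℂ := Complex.exp (Real.pi * Complex.I / N)

/-- The Pauli X matrix. -/
def Xm : Matrix (Fin 2) (Fin 2) ℂ := !![0, 1; 1, 0]

/-- The precision-`N` phase matrix `P = diag(1, ω²)`. -/
noncomputable def Pm (N : ℕ) : Matrix (Fin 2) (Fin 2) ℂ := !![1, 0; 0, (omN N) ^ 2]

/-- The precision-`N` XP operator `XP_N(p|x|z)` on `n` qubits, the matrix indexed by bit
strings whose `(f, e)` entry is `ω^p * ∏ i, (X^(x i) * P^(z i)) (f i) (e i)`. -/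
noncomputable def XP (N n : ℕ) (p : ℤ) (x z : Fin n → ℤ) :
    Matrix (Fin n → Fin 2) (Fin n → Fin 2) ℂ :=
  Matrix.of fun f e => (omN N) ^ p * ∏ i, ((Xm ^ (x i)) * (Pm N) ^ (z i)) (f i) (e i)

/-- The antisymmetric operator `D_N(z) = XP_N(∑ i, z i | 0 | -z)`. -/
noncomputable def DN (N n : ℕ) (z : Fin n → ℤ) :
    Matrix (Fin n → Fin 2) (Fin n → Fin 2) ℂ :=
  XP N n (∑ i, z i) 0 (-z)

/-- A vector is binary if every entry is 0 or 1. -/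
def IsBinary {n : ℕ} (x : Fin n → ℤ) : Prop := ∀ i, x i = 0 ∨ x i = 1

theorem Matrix.diagonal_zpow {ι K : Type*} [Fintype ι] [DecidableEq ι] [Field K] {d : ι → K}
    (hd : ∀ i, d i ≠ 0) (k : ℤ) : diagonal d ^ k = diagonal (d ^ k) := by
  cases k with
  | ofNat k => simp only [Int.ofNat_eq_natCast, zpow_natCast, diagonal_pow]
  | negSucc k =>
    rw [zpow_negSucc, zpow_negSucc, diagonal_pow]
    refine inv_eq_left_inv ?_
    rw [diagonal_mul_diagonal, ← diagonal_one]
    congr 1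
    ext i
    exact inv_mul_cancel₀ (pow_ne_zero _ (hd i))

theorem zpow_sum_of_ne_zero {ι G₀ : Type*} [CommGroupWithZero G₀] {a : G₀} (ha : a ≠ 0)
    (s : Finset ι) (c : ι → ℤ) : a ^ (∑ i ∈ s, c i) = ∏ i ∈ s, a ^ c i := by
  induction s using Finset.cons_induction with
  | empty => simp
  | cons i s hi ih => rw [Finset.sum_cons, Finset.prod_cons, zpow_add₀ ha, ih]

theorem Matrix.of_prod_ite_mulVec_single {ι α R : Type*} [Fintype ι] [DecidableEq ι]
    [Fintype α] [DecidableEq α] [CommSemiring R] (c : R) (σ : ι → α → α) (w : ι → α → R)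
    (e : ι → α) :
    (of fun f g => c * ∏ i, if f i = σ i (g i) then w i (g i) else 0) *ᵥ Pi.single e 1 =
      (c * ∏ i, w i (e i)) • Pi.single (fun i => σ i (e i)) 1 := by
  ext f
  simp only [mulVec_single, col_apply, of_apply, Fintype.prod_ite_zero, ← funext_iff,
    Pi.smul_apply, Pi.single_apply, smul_eq_mul]
  split_ifs <;> simp

theorem omN_ne_zero (N : ℕ) : omN N ≠ 0 := Complex.exp_ne_zero _

theorem Pm_eq_diagonal (N : ℕ) : Pm N = diagonal fun e : Fin 2 => omN N ^ (2 * (e : ℤ)) := by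
  ext i j
  fin_cases i <;> fin_cases j <;> simp [Pm]

theorem Pm_zpow (N : ℕ) (b : ℤ) : Pm N ^ b = diagonal fun e : Fin 2 => omN N ^ (2 * e * b : ℤ) := by
  rw [Pm_eq_diagonal, diagonal_zpow fun _ => zpow_ne_zero _ (omN_ne_zero N)]
  congr 1
  ext e
  rw [Pi.pow_apply, ← _root_.zpow_mul]

theorem Xm_mul_apply (M : Matrix (Fin 2) (Fin 2) ℂ) (f e : Fin 2) : (Xm * M) f e = M (f + 1) e := by
  fin_cases f <;> simp [Xm, mul_apply, Fin.sum_univ_two]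

theorem Xm_zpow_mul_Pm_zpow_apply (N : ℕ) {a : ℤ} (ha : a = 0 ∨ a = 1) (b : ℤ) (f e : Fin 2) :
    (Xm ^ a * Pm N ^ b) f e =
      if f = e + Fin.ofNat 2 a.toNat then omN N ^ (2 * e * b : ℤ) else 0 := by
  rcases ha with rfl | rfl
  · rw [zpow_zero, one_mul, Pm_zpow, diagonal_apply]
    fin_cases f <;> fin_cases e <;> simp
  · rw [zpow_one, Xm_mul_apply, Pm_zpow, diagonal_apply]
    fin_cases f <;> fin_cases e <;> simp

theorem XP_mulVec_single_general (N n : ℕ) (p : ℤ) (x z : Fin n → ℤ)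
    (hx : IsBinary x) (e : Fin n → Fin 2) :
    (XP N n p x z).mulVec (Pi.single e 1) =
      (omN N) ^ (p + 2 * ∑ i, (e i : ℤ) * z i) •
        (Pi.single (fun i => e i + (Fin.ofNat 2 (x i).toNat : Fin 2)) 1 : (Fin n → Fin 2) → ℂ) := by
  have hXP : XP N n p x z = of fun f e => omN N ^ p *
      ∏ i, if f i = e i + Fin.ofNat 2 (x i).toNat then omN N ^ (2 * e i * z i : ℤ) else 0 := by
    ext f e
    simp only [XP, of_apply, Xm_zpow_mul_Pm_zpow_apply N (hx _)]
  rw [hXP, of_prod_ite_mulVec_single (σ := fun i a => a + Fin.ofNat 2 (x i).toNat)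
    (w := fun i a => omN N ^ (2 * a * z i : ℤ)), zpow_add₀ (omN_ne_zero N), Finset.mul_sum,
    zpow_sum_of_ne_zero (omN_ne_zero N)]
  simp only [mul_assoc]

/-- **Action of an XP operator on a computational basis vector** (OP):
`XP_N(p|x|z) |e⟩ = ω^(p + 2 e·z) |e ⊕ x⟩`, where `⊕` is componentwise addition mod 2. -/
theorem XP_mulVec_single (N n : ℕ) (hN : 2 ≤ N) (hn : 1 ≤ n) (p : ℤ) (x z : Fin n → ℤ)
    (hx : IsBinary x) (e : Fin n → Fin 2) :
    (XP N n p x z).mulVec (Pi.single e 1) =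
      (omN N) ^ (p + 2 * ∑ i, (e i : ℤ) * z i) •
        (Pi.single (fun i => e i + (Fin.ofNat 2 (x i).toNat : Fin 2)) 1 : (Fin n → Fin 2) → ℂ) :=
  XP_mulVec_single_general N n p x z hx e
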